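/- arXiv:math/9912093 — 2 statements merged into one kernel-verified Lean document; each statement's English description precedes it below -/
import Mathlib

section
/- Let 𝔛 ⊂ ℂ be a discrete, closed (locally finite) set and f_1,…,f_N, g_1,…,g_N ∈ ℓ²(𝔛) with Σ_{j=1}^N f_j(x) g_j(x) = 0 for all x ∈ 𝔛. Suppose L is a bounded linear operator on ℓ²(𝔛) with matrix entries L(x,y) = (Σ_{j=1}^N f_j(x) g_j(y))/(x−y) for x ≠ y and L(x,x) = 0, that Lᵗ is a bounded linear operator with matrix entries Lᵗ(x,y) = L(y,x), and that I + L and I + Lᵗ are invertible. Set F_j = (I+L)^{−1} f_j and G_j = (I+Lᵗ)^{−1} g_j. Then Σ_{j=1}^N F_j(x) G_j(x) = 0 for every x ∈ 𝔛. -/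
/-!
Let `⟨u, v⟩ = ∑ u(y) v(y)` be the bilinear pairing on `ℓ²(𝔛)`, for which `Lᵗ` is the transpose
of `L`, and put `ψ = (I + L)⁻¹ δₓ`, `χ = (I + Lᵗ)⁻¹ δₓ`. Then `F_j(x) = ⟨f_j, χ⟩` and
`G_j(x) = ⟨g_j, ψ⟩`, so `∑_j F_j(x) G_j(x) = ∑_{y,z} χ(y) K(y,z) ψ(z)` with
`K(y,z) = ∑_j f_j(y) g_j(z) = (y - z) L(y,z)`; on the diagonal this is where `∑_j f_j g_j = 0`
enters. So `K` is the matrix of the commutator `[M, L]`, `M` being multiplication by `y - x`, and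
`⟨χ, [M, L] ψ⟩ = ⟨χ, M (δₓ - ψ)⟩ - ⟨δₓ - χ, M ψ⟩ = 0` because `M δₓ = 0`.
As `M` is unbounded, this computation is done for the bounded, `2`-Lipschitz truncations of
`y - x` to the square `[-n, n]²`, and the limit `n → ∞` is taken by dominated convergence.
-/
noncomputable section

open scoped ENNReal

def entry {X : Type*} (A : lp (fun _ : X => ℂ) 2 →L[ℂ] lp (fun _ : X => ℂ) 2) (x y : X) : ℂ :=
  letI := Classical.decEq X
  inner (𝕜 := ℂ) (lp.single 2 x (1:ℂ)) (A (lp.single 2 y 1))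

namespace IntegrableOperator

open Filter Topology

def truncate (n : ℝ) (w : ℂ) : ℂ := ⟨max (-n) (min n w.re), max (-n) (min n w.im)⟩

lemma abs_clamp_sub_clamp_le (n a b : ℝ) :
    |max (-n) (min n a) - max (-n) (min n b)| ≤ |a - b| := by
  rw [max_comm, max_comm (-n)]
  refine (abs_max_sub_max_le_abs _ _ _).trans ?_
  simpa using abs_min_sub_min_le_max n a n b

lemma truncate_eq_self {n : ℝ} {w : ℂ} (h : ‖w‖ ≤ n) : truncate n w = w := by
  have hre := abs_le.mp ((Complex.abs_re_le_norm w).trans h)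
  have him := abs_le.mp ((Complex.abs_im_le_norm w).trans h)
  apply Complex.ext <;> simp [truncate, hre, him]

lemma norm_truncate_le {n : ℝ} (hn : 0 ≤ n) (w : ℂ) : ‖truncate n w‖ ≤ 2 * n := by
  refine (Complex.norm_le_abs_re_add_abs_im _).trans ?_
  have hclamp (a : ℝ) : |max (-n) (min n a)| ≤ n :=
    abs_le.mpr ⟨le_max_left _ _, max_le (by linarith) (min_le_left _ _)⟩
  simp only [truncate]
  linarith [hclamp w.re, hclamp w.im]

lemma norm_truncate_sub_le (n : ℝ) (w w' : ℂ) :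
    ‖truncate n w - truncate n w'‖ ≤ 2 * ‖w - w'‖ := by
  refine (Complex.norm_le_abs_re_add_abs_im _).trans ?_
  have hre := (abs_clamp_sub_clamp_le n w.re w'.re).trans (Complex.abs_re_le_norm (w - w'))
  have him := (abs_clamp_sub_clamp_le n w.im w'.im).trans (Complex.abs_im_le_norm (w - w'))
  simp only [truncate, Complex.sub_re, Complex.sub_im]
  linarith

variable {X : Type*}

local notation "ℓ²" => lp (fun _ : X => ℂ) 2

lemma entry_eq_apply [DecidableEq X] (A : ℓ² →L[ℂ] ℓ²) (x y : X) :
    entry A x y = A (lp.single 2 y 1) x := by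
  rw [entry]
  convert lp.inner_single_left (𝕜 := ℂ) x (1 : ℂ) (A (lp.single 2 y 1)) using 1
  · congr!
  · simp

lemma single_eq_smul_single_one [DecidableEq X] (y : X) (c : ℂ) :
    (lp.single 2 y c : ℓ²) = c • lp.single 2 y 1 := by
  rw [← lp.single_smul (E := fun _ : X => ℂ), smul_eq_mul, mul_one]

lemma hasSum_entry_mul (A : ℓ² →L[ℂ] ℓ²) (u : ℓ²) (x : X) :
    HasSum (fun y => entry A x y * u y) (A u x) := by
  classical
  refine (((lp.evalCLM ℂ _ 2 x).comp A).hasSum (lp.hasSum_single (by norm_num) u)).congr_fun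
    fun y => ?_
  show entry A x y * u y = A (lp.single 2 y (u y)) x
  rw [single_eq_smul_single_one, map_smul, lp.coeFn_smul, Pi.smul_apply, smul_eq_mul,
    entry_eq_apply, mul_comm]

def pairing : ℓ² →L[ℂ] ℓ² →L[ℂ] ℂ :=
  lp.dualPairing 2 2 (fun _ => ContinuousLinearMap.mul ℂ ℂ) (K := 1)
    (fun _ => ContinuousLinearMap.opNorm_mul_le ℂ ℂ)

lemma summable_norm_mul (u v : ℓ²) : Summable fun x => ‖u x * v x‖ := by
  simpa only [norm_mul] using lp.summable_mul (by rw [Real.holderConjugate_iff]; norm_num) u v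

lemma hasSum_pairing (u v : ℓ²) : HasSum (fun x => u x * v x) (pairing u v) :=
  (summable_norm_mul u v).of_norm.hasSum

lemma pairing_apply (u v : ℓ²) : pairing u v = ∑' x, u x * v x := rfl

lemma pairing_comm (u v : ℓ²) : pairing u v = pairing v u := by
  simp only [pairing_apply, mul_comm]

lemma pairing_single_right [DecidableEq X] (u : ℓ²) (x : X) :
    pairing u (lp.single 2 x 1) = u x := by
  rw [pairing_apply, tsum_eq_single x fun y hy => by simp [hy]]
  simp

lemma pairing_apply_left_of_entry {A At : ℓ² →L[ℂ] ℓ²} (h : ∀ x y, entry At x y = entry A y x)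
    (u v : ℓ²) : pairing (A u) v = pairing u (At v) := by
  classical
  have hcol (y : X) : pairing (A (lp.single 2 y 1)) v = At v y := by
    rw [pairing_apply]
    refine ((hasSum_entry_mul At v y).congr_fun fun x => ?_).tsum_eq
    rw [h, entry_eq_apply]
  have hexp := (((pairing.flip v).comp A).hasSum (lp.hasSum_single (by norm_num) u))
  refine hexp.unique ((hasSum_pairing u (At v)).congr_fun fun y => ?_)
  simp [single_eq_smul_single_one y (u y), hcol]

lemma pairing_one_add_apply_left {A At : ℓ² →L[ℂ] ℓ²} (h : ∀ x y, entry At x y = entry A y x)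
    (u v : ℓ²) : pairing ((1 + A) u) v = pairing u ((1 + At) v) := by
  simp [pairing_apply_left_of_entry h]

lemma pairing_inverse_apply_left {B Bt : ℓ² →L[ℂ] ℓ²} (hB : IsUnit B) (hBt : IsUnit Bt)
    (h : ∀ u v, pairing (B u) v = pairing u (Bt v)) (u v : ℓ²) :
    pairing (Ring.inverse B u) v = pairing u (Ring.inverse Bt v) := by
  calc pairing (Ring.inverse B u) v
      = pairing (Ring.inverse B u) ((Bt * Ring.inverse Bt) v) := by
        rw [Ring.mul_inverse_cancel Bt hBt]; rfl
    _ = pairing ((B * Ring.inverse B) u) (Ring.inverse Bt v) := h _ _ |>.symm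
    _ = pairing u (Ring.inverse Bt v) := by
        rw [Ring.mul_inverse_cancel B hB]; rfl

lemma inverse_one_add_apply [DecidableEq X] {A At : ℓ² →L[ℂ] ℓ²}
    (h : ∀ x y, entry At x y = entry A y x) (hA : IsUnit (1 + A)) (hAt : IsUnit (1 + At))
    (u : ℓ²) (x : X) :
    Ring.inverse (1 + A) u x = pairing u (Ring.inverse (1 + At) (lp.single 2 x 1)) := by
  rw [← pairing_single_right, pairing_inverse_apply_left hA hAt (pairing_one_add_apply_left h)]

lemma inverse_one_add_apply_add (A : ℓ² →L[ℂ] ℓ²) (hA : IsUnit (1 + A)) (u : ℓ²) :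
    Ring.inverse (1 + A) u + A (Ring.inverse (1 + A) u) = u := by
  simpa using congr($(Ring.mul_inverse_cancel _ hA) u)

lemma tsum_tsum_mul_commutator_mul_eq_zero [DecidableEq X] {A At : ℓ² →L[ℂ] ℓ²}
    (h : ∀ x y, entry At x y = entry A y x) {x : X} {ψ χ : ℓ²}
    (hψ : ψ + A ψ = lp.single 2 x 1) (hχ : χ + At χ = lp.single 2 x 1)
    {m : X → ℂ} (hm : Memℓp m ∞) (hmx : m x = 0) :
    ∑' y, ∑' z, χ y * ((m y - m z) * entry A y z) * ψ z = 0 := by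
  let mψ : ℓ² := ⟨fun y => m y * ψ y,
    hm.bilin_of_top_left (fun _ => ContinuousLinearMap.mul ℂ ℂ)
      (fun _ => ContinuousLinearMap.opNorm_mul_le ℂ ℂ) (lp.memℓp ψ)⟩
  have hmδ (y : X) : m y * (lp.single 2 x 1 : ℓ²) y = 0 := by
    by_cases hy : y = x
    · simp [hy, hmx]
    · simp [hy]
  have hAψ : A ψ = lp.single 2 x 1 - ψ := eq_sub_of_add_eq' hψ
  have hAtχ : At χ = lp.single 2 x 1 - χ := eq_sub_of_add_eq' hχ
  have hrow (y : X) : ∑' z, χ y * ((m y - m z) * entry A y z) * ψ z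
      = -(χ y * mψ y) - χ y * A mψ y := by
    refine (((hasSum_entry_mul A ψ y).mul_left (m y)).sub (hasSum_entry_mul A mψ y)
      |>.mul_left (χ y) |>.congr_fun fun z => ?_).tsum_eq.trans ?_
    · simp only [mψ]; ring
    · rw [hAψ, lp.coeFn_sub, Pi.sub_apply, mul_sub (m y), hmδ]
      simp only [mψ]; ring
  have hAmψ : pairing χ (A mψ) = -pairing χ mψ := by
    rw [pairing_comm, pairing_apply_left_of_entry h, hAtχ, map_sub, pairing_single_right,
      pairing_comm]
    simp [mψ, hmx]
  rw [tsum_congr hrow, ((hasSum_pairing χ mψ).neg.sub (hasSum_pairing χ (A mψ))).tsum_eq, hAmψ]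
  ring

lemma tsum_mul_commutator_mul_eq_zero [DecidableEq X] {A At : ℓ² →L[ℂ] ℓ²}
    (h : ∀ x y, entry At x y = entry A y x) {x : X} {ψ χ : ℓ²}
    (hψ : ψ + A ψ = lp.single 2 x 1) (hχ : χ + At χ = lp.single 2 x 1) (pos : X → ℂ)
    (hsum : Summable fun p : X × X =>
      ‖χ p.1 * ((pos p.1 - pos p.2) * entry A p.1 p.2) * ψ p.2‖) :
    ∑' p : X × X, χ p.1 * ((pos p.1 - pos p.2) * entry A p.1 p.2) * ψ p.2 = 0 := by
  let m (n : ℕ) (y : X) : ℂ := truncate n (pos y - pos x)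
  have hbound (n : ℕ) (p : X × X) :
      ‖χ p.1 * ((m n p.1 - m n p.2) * entry A p.1 p.2) * ψ p.2‖
        ≤ 2 * ‖χ p.1 * ((pos p.1 - pos p.2) * entry A p.1 p.2) * ψ p.2‖ := by
    have hlip := norm_truncate_sub_le n (pos p.1 - pos x) (pos p.2 - pos x)
    rw [sub_sub_sub_cancel_right] at hlip
    calc _ = ‖χ p.1‖ * (‖m n p.1 - m n p.2‖ * ‖entry A p.1 p.2‖) * ‖ψ p.2‖ := by
          simp only [norm_mul]
      _ ≤ ‖χ p.1‖ * (2 * ‖pos p.1 - pos p.2‖ * ‖entry A p.1 p.2‖) * ‖ψ p.2‖ := by gcongr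
      _ = _ := by simp only [norm_mul]; ring
  have htrunc (n : ℕ) :
      ∑' p : X × X, χ p.1 * ((m n p.1 - m n p.2) * entry A p.1 p.2) * ψ p.2 = 0 := by
    have hs := (hsum.mul_left 2).of_norm_bounded (hbound n)
    rw [hs.tsum_prod' fun y => hs.prod_factor y]
    refine tsum_tsum_mul_commutator_mul_eq_zero h hψ hχ (memℓp_infty ⟨2 * n, ?_⟩) ?_
    · rintro _ ⟨y, rfl⟩
      exact norm_truncate_le n.cast_nonneg _
    · simp [m, truncate_eq_self]
  have hlim (p : X × X) :
      Tendsto (fun n => χ p.1 * ((m n p.1 - m n p.2) * entry A p.1 p.2) * ψ p.2) atTop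
        (𝓝 (χ p.1 * ((pos p.1 - pos p.2) * entry A p.1 p.2) * ψ p.2)) := by
    refine tendsto_const_nhds.congr' ?_
    filter_upwards [tendsto_natCast_atTop_atTop.eventually_ge_atTop
      (max ‖pos p.1 - pos x‖ ‖pos p.2 - pos x‖)] with n hn
    simp only [m, truncate_eq_self ((le_max_left _ _).trans hn),
      truncate_eq_self ((le_max_right _ _).trans hn), sub_sub_sub_cancel_right]
  exact tendsto_nhds_unique (tendsto_tsum_of_dominated_convergence (hsum.mul_left 2) hlim
    (.of_forall hbound)) (by simp only [htrunc, tendsto_const_nhds])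

lemma hasSum_mul_kernel_mul {ι : Type*} (s : Finset ι) (f g : ι → ℓ²) (χ ψ : ℓ²) :
    HasSum (fun p : X × X => χ p.1 * (∑ j ∈ s, f j p.1 * g j p.2) * ψ p.2)
      (∑ j ∈ s, pairing (f j) χ * pairing (g j) ψ) := by
  refine (hasSum_sum (f := fun j p => χ p.1 * f j p.1 * (g j p.2 * ψ p.2)) fun j _ => ?_).congr_fun
    fun p => ?_
  · have hsumm := summable_mul_of_summable_norm (summable_norm_mul χ (f j))
      (summable_norm_mul (g j) ψ)
    have hprod := (hasSum_pairing χ (f j)).mul (hasSum_pairing (g j) ψ) hsumm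
    rw [pairing_comm]
    exact hprod
  · simp only [Finset.mul_sum, Finset.sum_mul]
    exact Finset.sum_congr rfl fun j _ => by ring

end IntegrableOperator

open IntegrableOperator in
theorem statement5_general (𝔛 : Set ℂ)
    (N : ℕ) (f g : Fin N → lp (fun _ : 𝔛 => ℂ) 2)
    (horth : ∀ x : 𝔛, ∑ j, f j x * g j x = 0)
    (L Lt : lp (fun _ : 𝔛 => ℂ) 2 →L[ℂ] lp (fun _ : 𝔛 => ℂ) 2)
    (hL : ∀ x y : 𝔛, x ≠ y → entry L x y = (∑ j, f j x * g j y) / ((x : ℂ) - (y : ℂ)))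
    (hLt : ∀ x y : 𝔛, entry Lt x y = entry L y x)
    (hinv : IsUnit (1 + L)) (hinvt : IsUnit (1 + Lt)) :
    ∀ x : 𝔛, ∑ j, (Ring.inverse (1 + L) (f j)) x * (Ring.inverse (1 + Lt) (g j)) x = 0 := by
  classical
  intro x
  have hkernel (y z : 𝔛) : ∑ j, f j y * g j z = ((y : ℂ) - z) * entry L y z := by
    by_cases hyz : y = z
    · rw [hyz, horth, sub_self, zero_mul]
    · rw [hL y z hyz, mul_div_cancel₀ _ (sub_ne_zero.mpr (Subtype.coe_ne_coe.mpr hyz))]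
  set ψ := Ring.inverse (1 + L) (lp.single 2 x 1)
  set χ := Ring.inverse (1 + Lt) (lp.single 2 x 1)
  have hsum := hasSum_mul_kernel_mul Finset.univ f g χ ψ
  simp only [hkernel] at hsum
  calc ∑ j, (Ring.inverse (1 + L) (f j)) x * (Ring.inverse (1 + Lt) (g j)) x
      = ∑ j, pairing (f j) χ * pairing (g j) ψ := by
        simp only [inverse_one_add_apply hLt hinv hinvt,
          inverse_one_add_apply (fun x y => (hLt y x).symm) hinvt hinv, ψ, χ]
    _ = _ := hsum.tsum_eq.symm
    _ = 0 := tsum_mul_commutator_mul_eq_zero hLt (inverse_one_add_apply_add L hinv _)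
        (inverse_one_add_apply_add Lt hinvt _) _ (summable_norm_iff.mpr hsum.summable)

theorem statement5 (𝔛 : Set ℂ) (hdisc : DiscreteTopology 𝔛) (hclosed : IsClosed 𝔛)
    (N : ℕ) (f g : Fin N → lp (fun _ : 𝔛 => ℂ) 2)
    (horth : ∀ x : 𝔛, ∑ j, f j x * g j x = 0)
    (L Lt : lp (fun _ : 𝔛 => ℂ) 2 →L[ℂ] lp (fun _ : 𝔛 => ℂ) 2)
    (hL : ∀ x y : 𝔛, x ≠ y → entry L x y = (∑ j, f j x * g j y) / ((x : ℂ) - (y : ℂ)))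
    (hLdiag : ∀ x : 𝔛, entry L x x = 0)
    (hLt : ∀ x y : 𝔛, entry Lt x y = entry L y x)
    (hinv : IsUnit (1 + L)) (hinvt : IsUnit (1 + Lt)) :
    ∀ x : 𝔛, ∑ j, (Ring.inverse (1 + L) (f j)) x * (Ring.inverse (1 + Lt) (g j)) x = 0 :=
  statement5_general 𝔛 N f g horth L Lt hL hLt hinv hinvt
end
end

section
/- Let 𝔛 ⊂ ℂ be a discrete, closed (locally finite) set and w : 𝔛 → Mat(k, ℂ) with w(x)² = 0 for every x ∈ 𝔛. If m is a solution of the discrete Riemann–Hilbert problem (𝔛, w), normalized at infinity with some data (δ, (R_k)), then det m(ζ) = 1 for every ζ ∈ ℂ∖𝔛; in particular m(ζ) is invertible for every ζ ∈ ℂ∖𝔛, and any two solutions normalized at infinity with a common choice of data coincide. -/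
noncomputable section

open scoped Topology

/-- Square complex matrices of size k. -/
abbrev Mat (k : ℕ) := Matrix (Fin k) (Fin k) ℂ

/-- `m` is a solution of the discrete Riemann–Hilbert problem `(𝔛, w)`:
it is analytic on ℂ∖𝔛 (entrywise), and at every `x ∈ 𝔛` it has at most a simple pole
whose residue `l` (the limit of `(ζ−x)•m(ζ)`) equals the limit of `m(ζ)w(x)` as `ζ → x`. -/
def IsDRHPSol (k : ℕ) (𝔛 : Set ℂ) (w : 𝔛 → Mat k) (m : ℂ → Mat k) : Prop :=
  (∀ z ∉ 𝔛, ∀ i j, AnalyticAt ℂ (fun ζ => m ζ i j) z) ∧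
  ∀ x : 𝔛, ∃ l : Mat k,
    Filter.Tendsto (fun ζ => m ζ * w x) (𝓝[≠] (x : ℂ)) (𝓝 l) ∧
    Filter.Tendsto (fun ζ => (ζ - (x : ℂ)) • m ζ) (𝓝[≠] (x : ℂ)) (𝓝 l)

/-- `m` is normalized at infinity with data `(δ, R)`: `δ > 0`, `R n → ∞`, every circle
`{|ζ| = R n}` lies at distance at least `δ` from `𝔛`, and `m(ζ) → I` uniformly as
`|ζ| → ∞` over the region `{ζ : dist(ζ, 𝔛) ≥ δ}`. -/
def NormalizedAtInfty (k : ℕ) (𝔛 : Set ℂ) (m : ℂ → Mat k) (δ : ℝ) (R : ℕ → ℝ) : Prop :=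
  0 < δ ∧ Filter.Tendsto R Filter.atTop Filter.atTop ∧
  (∀ n, ∀ ζ : ℂ, ‖ζ‖ = R n → ∀ x ∈ 𝔛, δ ≤ dist ζ x) ∧
  ∀ ε > 0, ∃ M : ℝ, ∀ ζ : ℂ, M ≤ ‖ζ‖ → (∀ x ∈ 𝔛, δ ≤ dist ζ x) →
    ∀ i j, ‖m ζ i j - (1 : Mat k) i j‖ ≤ ε


/-!
Near a point `x ∈ 𝔛` the residue condition says exactly that `m ζ * (1 - (ζ - x)⁻¹ • w x)`
has a removable singularity at `x`. As `w x` squares to zero, `1 - c • w x` has determinant one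
for every `c`, so `det m`, and for two solutions the entries of `m₁ * adjugate m₂`, are
unchanged by this regularization and therefore extend to entire functions. On the circles
`‖ζ‖ = R n` they tend to `1` and to the entries of the identity, so by the maximum modulus
principle they are constant: `det m = 1`, and `m₁ * adjugate m₂ = 1` forces `m₁ = m₂`.
-/

open Filter Set Metric Bornology

namespace Matrix
variable {n R : Type*} [Fintype n] [DecidableEq n] [CommRing R]

theorem det_one_sub_smul_of_isNilpotent [IsDomain R] {M : Matrix n n R} (hM : IsNilpotent M)
    (c : R) : (1 - c • M).det = 1 := by
  -- `charpolyRev M = det (1 - X • M)` is a unit of `R[X]`, hence a constant, namely its value at 0.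
  obtain ⟨r, -, hr⟩ := Polynomial.isUnit_iff.mp (isUnit_charpolyRev_of_isNilpotent hM)
  have hr1 : r = 1 := by simpa [← hr] using eval_charpolyRev (M := M)
  have := congrArg (Polynomial.eval c) hr
  rw [hr1, Polynomial.eval_C, charpolyRev, eval_det] at this
  simpa [matPolyEquiv_map_C, ← smul_eq_mul_diagonal] using this.symm

theorem mul_mul_adjugate_mul_of_det_eq_one (A B U : Matrix n n R) (hU : U.det = 1) :
    A * U * (B * U).adjugate = A * B.adjugate := by
  rw [adjugate_mul_distrib, mul_assoc, ← mul_assoc U, mul_adjugate, hU, one_smul, one_mul]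

end Matrix

section Entrywise
variable {𝕜 E n : Type*} [NontriviallyNormedField 𝕜] [NormedAddCommGroup E] [NormedSpace 𝕜 E]
  [Fintype n] {f g : E → Matrix n n 𝕜} {z : E}

theorem analyticAt_matrix_mul_apply (hf : ∀ i j, AnalyticAt 𝕜 (fun x => f x i j) z)
    (hg : ∀ i j, AnalyticAt 𝕜 (fun x => g x i j) z) (i j : n) :
    AnalyticAt 𝕜 (fun x => (f x * g x) i j) z := by
  simp only [Matrix.mul_apply]
  exact Finset.analyticAt_fun_sum _ fun s _ => (hf i s).mul (hg s j)

variable [DecidableEq n]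

theorem analyticAt_matrix_det (hf : ∀ i j, AnalyticAt 𝕜 (fun x => f x i j) z) :
    AnalyticAt 𝕜 (fun x => (f x).det) z := by
  simp only [Matrix.det_apply']
  exact Finset.analyticAt_fun_sum _ fun σ _ =>
    analyticAt_const.mul (Finset.analyticAt_fun_prod _ fun i _ => hf (σ i) i)

theorem analyticAt_matrix_adjugate_apply (hf : ∀ i j, AnalyticAt 𝕜 (fun x => f x i j) z)
    (i j : n) : AnalyticAt 𝕜 (fun x => (f x).adjugate i j) z := by
  simp only [Matrix.adjugate_apply]
  refine analyticAt_matrix_det fun a b => ?_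
  rcases eq_or_ne a j with rfl | ha
  · simpa only [Matrix.updateRow_self] using analyticAt_const
  · simpa only [Matrix.updateRow_ne ha] using hf a b

end Entrywise

theorem eventually_nhdsNE_notMem_of_discreteTopology {α : Type*} [TopologicalSpace α]
    {X : Set α} (hX : DiscreteTopology X) {x : α} (hx : x ∈ X) : ∀ᶠ z in 𝓝[≠] x, z ∉ X :=
  inf_principal_eq_bot.mp (discreteTopology_subtype_iff.mp hX x hx)

theorem disjoint_setOf_le_dist {α : Type*} [PseudoMetricSpace α] {X : Set α} {δ : ℝ}
    (hδ : 0 < δ) : Disjoint {z | ∀ x ∈ X, δ ≤ dist z x} X :=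
  Set.disjoint_left.mpr fun z hz hzX => (hz z hzX).not_gt (by simpa using hδ)

namespace Complex
variable {E : Type*} [NormedAddCommGroup E] [NormedSpace ℂ E]

theorem exists_tendsto_nhdsNE_of_tendsto_sub_smul [CompleteSpace E] {f : ℂ → E} {c : ℂ}
    (hd : ∀ᶠ z in 𝓝[≠] c, DifferentiableAt ℂ f z)
    (hf : Tendsto (fun z => (z - c) • f z) (𝓝[≠] c) (𝓝 0)) :
    ∃ L, Tendsto f (𝓝[≠] c) (𝓝 L) := by
  refine ⟨_, tendsto_limUnder_of_differentiable_on_punctured_nhds_of_isLittleO hd ?_⟩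
  have hsub : Tendsto (fun z => z - c) (𝓝[≠] c) (𝓝[≠] 0) := by
    refine tendsto_nhdsWithin_of_tendsto_nhds_of_eventually_within _ ?_ ?_
    · simpa using ((continuous_sub_right c).tendsto c).mono_left nhdsWithin_le_nhds
    · filter_upwards [self_mem_nhdsWithin] with z hz using sub_ne_zero.mpr hz
  have hf_small : f =o[𝓝[≠] c] fun z => (z - c)⁻¹ := by
    refine ((Asymptotics.isBigO_refl (fun z => (z - c)⁻¹) _).smul_isLittleO
      ((Asymptotics.isLittleO_one_iff ℂ).mpr hf)).congr' ?_ (by simp)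
    filter_upwards [self_mem_nhdsWithin] with z hz
    rw [smul_smul, inv_mul_cancel₀ (sub_ne_zero.mpr hz), one_smul]
  exact hf_small.sub <| Asymptotics.isLittleO_const_left.mpr <|
    Or.inr (tendsto_norm_inv_nhdsNE_zero_atTop.comp hsub)

theorem exists_differentiable_eqOn_compl [CompleteSpace E] {X : Set ℂ}
    (hX : DiscreteTopology X) (hXc : IsClosed X) {g : ℂ → E}
    (hg : ∀ z ∉ X, DifferentiableAt ℂ g z) (hlim : ∀ x ∈ X, ∃ L, Tendsto g (𝓝[≠] x) (𝓝 L)) :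
    ∃ G : ℂ → E, Differentiable ℂ G ∧ EqOn G g Xᶜ := by
  classical
  choose L hL using hlim
  set G : ℂ → E := fun z => if hz : z ∈ X then L z hz else g z
  have hGg : EqOn G g Xᶜ := fun z hz => dif_neg hz
  have hG_off : ∀ z ∉ X, DifferentiableAt ℂ G z := fun z hz =>
    (hg z hz).congr_of_eventuallyEq (hGg.eventuallyEq_of_mem (hXc.isOpen_compl.mem_nhds hz))
  refine ⟨G, fun z => ?_, hGg⟩
  by_cases hz : z ∈ X
  · have hnear := eventually_nhdsNE_notMem_of_discreteTopology hX hz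
    refine (analyticAt_of_differentiable_on_punctured_nhds_of_continuousAt
      (hnear.mono hG_off) ?_).differentiableAt
    rw [continuousAt_iff_punctured_nhds, show G z = L z hz from dif_pos hz]
    exact (hL z hz).congr' (hnear.mono fun y hy => (hGg hy).symm)
  · exact hG_off z hz

theorem _root_.Differentiable.eq_of_tendsto_cobounded_inf_principal {G : ℂ → E}
    (hG : Differentiable ℂ G) {S : Set ℂ} {R : ℕ → ℝ} (hR : Tendsto R atTop atTop)
    (hS : ∀ n, sphere 0 (R n) ⊆ S) {c : E} (hc : Tendsto G (cobounded ℂ ⊓ 𝓟 S) (𝓝 c))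
    (z : ℂ) : G z = c := by
  refine eq_of_forall_dist_le fun ε hε => ?_
  have hfar := hc.eventually (closedBall_mem_nhds c hε)
  rw [eventually_inf_principal, ← comap_norm_atTop, eventually_comap, eventually_atTop] at hfar
  obtain ⟨r, hr⟩ := hfar
  obtain ⟨n, hn⟩ := (hR.eventually_ge_atTop (max r (‖z‖ + 1))).exists
  have hz : ‖z‖ < R n := by linarith [le_max_right r (‖z‖ + 1)]
  have hsphere : ∀ ζ ∈ frontier (ball (0 : ℂ) (R n)), ‖G ζ - c‖ ≤ ε := by
    intro ζ hζ
    rw [frontier_ball 0 (by linarith [norm_nonneg z])] at hζ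
    have hζR : ‖ζ‖ = R n := by simpa using hζ
    exact (mem_closedBall_iff_norm.mp
      (hr _ (hζR ▸ le_of_max_le_left hn) ζ rfl (hS n hζ)))
  rw [dist_eq_norm]
  exact norm_le_of_forall_mem_frontier_norm_le isBounded_ball
    (hG.sub_const c).diffContOnCl hsphere (subset_closure (mem_ball_zero_iff.mpr hz))

theorem eqOn_compl_of_tendsto_cobounded_inf_principal [CompleteSpace E] {X : Set ℂ}
    (hX : DiscreteTopology X) (hXc : IsClosed X) {g : ℂ → E}
    (hg : ∀ z ∉ X, DifferentiableAt ℂ g z) (hlim : ∀ x ∈ X, ∃ L, Tendsto g (𝓝[≠] x) (𝓝 L))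
    {S : Set ℂ} {R : ℕ → ℝ} (hR : Tendsto R atTop atTop) (hS : ∀ n, sphere 0 (R n) ⊆ S)
    (hSX : Disjoint S X) {c : E} (hc : Tendsto g (cobounded ℂ ⊓ 𝓟 S) (𝓝 c)) :
    EqOn g (fun _ => c) Xᶜ := by
  obtain ⟨G, hG, hGg⟩ := exists_differentiable_eqOn_compl hX hXc hg hlim
  have hGc : Tendsto G (cobounded ℂ ⊓ 𝓟 S) (𝓝 c) :=
    hc.congr' <| mem_inf_of_right <| mem_principal.mpr fun z hz =>
      (hGg (hSX.notMem_of_mem_left hz)).symm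
  intro z hz
  rw [← hGg hz, hG.eq_of_tendsto_cobounded_inf_principal hR hS hGc]

end Complex

section DRHP
variable {k : ℕ} {𝔛 : Set ℂ} {w : 𝔛 → Mat k} {m : ℂ → Mat k}

theorem IsDRHPSol.exists_tendsto_mul_one_sub_smul (hX : DiscreteTopology 𝔛)
    (hm : IsDRHPSol k 𝔛 w m) (x : 𝔛) :
    ∃ L, Tendsto (fun ζ => m ζ * (1 - (ζ - x)⁻¹ • w x)) (𝓝[≠] (x : ℂ)) (𝓝 L) := by
  obtain ⟨l, hmw, hres⟩ := hm.2 x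
  have hnear := eventually_nhdsNE_notMem_of_discreteTopology hX x.2
  -- `(ζ - x) • m ζ (1 - (ζ - x)⁻¹ w) = (ζ - x) • m ζ - m ζ w`, and both terms tend to the residue.
  have hsmall : Tendsto (fun ζ => (ζ - (x : ℂ)) • (m ζ * (1 - (ζ - x)⁻¹ • w x))) (𝓝[≠] (x : ℂ))
      (𝓝 0) := by
    refine (sub_self l ▸ hres.sub hmw).congr' ?_
    filter_upwards [self_mem_nhdsWithin] with ζ hζ
    rw [mul_sub, mul_one, mul_smul_comm, smul_sub, smul_smul,
      mul_inv_cancel₀ (sub_ne_zero.mpr hζ), one_smul]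
  have hentry : ∀ i j, ∃ L, Tendsto (fun ζ => (m ζ * (1 - (ζ - x)⁻¹ • w x)) i j)
      (𝓝[≠] (x : ℂ)) (𝓝 L) := fun i j => by
    refine Complex.exists_tendsto_nhdsNE_of_tendsto_sub_smul ?_
      ((continuous_id.matrix_elem i j).tendsto 0 |>.comp hsmall)
    filter_upwards [self_mem_nhdsWithin, hnear] with ζ hζx hζ𝔛
    refine (analyticAt_matrix_mul_apply (hm.1 ζ hζ𝔛) (fun a b => ?_) i j).differentiableAt
    simp only [Matrix.sub_apply, Matrix.smul_apply, smul_eq_mul]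
    exact analyticAt_const.sub
      (((analyticAt_id.sub analyticAt_const).inv (sub_ne_zero.mpr hζx)).mul analyticAt_const)
  choose L hL using hentry
  exact ⟨Matrix.of L, tendsto_pi_nhds.2 fun i => tendsto_pi_nhds.2 fun j => hL i j⟩

variable {δ : ℝ} {R : ℕ → ℝ}

theorem NormalizedAtInfty.tendsto_cobounded (hn : NormalizedAtInfty k 𝔛 m δ R) :
    Tendsto m (cobounded ℂ ⊓ 𝓟 {ζ | ∀ x ∈ 𝔛, δ ≤ dist ζ x}) (𝓝 1) := by
  refine tendsto_pi_nhds.2 fun i => tendsto_pi_nhds.2 fun j => ?_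
  refine Metric.tendsto_nhds.2 fun ε hε => ?_
  obtain ⟨M, hM⟩ := hn.2.2.2 (ε / 2) (half_pos hε)
  filter_upwards [mem_inf_of_left (tendsto_norm_cobounded_atTop.eventually_ge_atTop M),
    mem_inf_of_right (mem_principal_self _)] with ζ hζM hζ
  rw [dist_eq_norm]
  exact (hM ζ hζM hζ i j).trans_lt (half_lt_self hε)

theorem NormalizedAtInfty.sphere_subset (hn : NormalizedAtInfty k 𝔛 m δ R) (n : ℕ) :
    sphere 0 (R n) ⊆ {ζ | ∀ x ∈ 𝔛, δ ≤ dist ζ x} :=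
  fun ζ hζ => hn.2.2.1 n ζ (mem_sphere_zero_iff_norm.mp hζ)

theorem IsDRHPSol.det_eq_one (hX : DiscreteTopology 𝔛) (hXc : IsClosed 𝔛)
    (hw : ∀ x, w x * w x = 0) (hm : IsDRHPSol k 𝔛 w m) (hn : NormalizedAtInfty k 𝔛 m δ R) :
    ∀ ζ ∉ 𝔛, (m ζ).det = 1 := by
  refine Complex.eqOn_compl_of_tendsto_cobounded_inf_principal hX hXc
    (fun z hz => (analyticAt_matrix_det (hm.1 z hz)).differentiableAt) (fun x hx => ?_)
    hn.2.1 hn.sphere_subset (disjoint_setOf_le_dist hn.1)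
    (by simpa [Function.comp_def] using
      (continuous_id.matrix_det.tendsto 1).comp hn.tendsto_cobounded)
  obtain ⟨L, hL⟩ := hm.exists_tendsto_mul_one_sub_smul hX ⟨x, hx⟩
  refine ⟨L.det, ((continuous_id.matrix_det.tendsto L).comp hL).congr fun ζ => ?_⟩
  simp [Matrix.det_mul, Matrix.det_one_sub_smul_of_isNilpotent ⟨2, (sq _).trans (hw _)⟩]

theorem IsDRHPSol.eq_of_normalizedAtInfty (hX : DiscreteTopology 𝔛) (hXc : IsClosed 𝔛)
    (hw : ∀ x, w x * w x = 0) {m₁ m₂ : ℂ → Mat k} (hm₁ : IsDRHPSol k 𝔛 w m₁)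
    (hm₂ : IsDRHPSol k 𝔛 w m₂) (hn₁ : NormalizedAtInfty k 𝔛 m₁ δ R)
    (hn₂ : NormalizedAtInfty k 𝔛 m₂ δ R) : ∀ ζ ∉ 𝔛, m₁ ζ = m₂ ζ := by
  have hcont : ∀ i j, Continuous fun p : Mat k × Mat k => (p.1 * p.2.adjugate) i j :=
    fun i j => (continuous_fst.matrix_mul continuous_snd.matrix_adjugate).matrix_elem i j
  have hprod : ∀ ζ ∉ 𝔛, m₁ ζ * (m₂ ζ).adjugate = 1 := fun ζ hζ => Matrix.ext fun i j => by
    refine Complex.eqOn_compl_of_tendsto_cobounded_inf_principal hX hXc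
      (g := fun ζ => (m₁ ζ * (m₂ ζ).adjugate) i j)
      (fun z hz => (analyticAt_matrix_mul_apply (hm₁.1 z hz)
        (analyticAt_matrix_adjugate_apply (hm₂.1 z hz)) i j).differentiableAt)
      (fun x hx => ?_) hn₁.2.1 hn₁.sphere_subset (disjoint_setOf_le_dist hn₁.1) ?_ hζ
    · obtain ⟨L₁, hL₁⟩ := hm₁.exists_tendsto_mul_one_sub_smul hX ⟨x, hx⟩
      obtain ⟨L₂, hL₂⟩ := hm₂.exists_tendsto_mul_one_sub_smul hX ⟨x, hx⟩
      refine ⟨_, ((hcont i j).tendsto (L₁, L₂)).comp (hL₁.prodMk_nhds hL₂) |>.congr fun ζ => ?_⟩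
      simp only [Function.comp_apply]
      rw [Matrix.mul_mul_adjugate_mul_of_det_eq_one _ _ _
        (Matrix.det_one_sub_smul_of_isNilpotent ⟨2, (sq _).trans (hw _)⟩ _)]
    · simpa [Function.comp_def] using ((hcont i j).tendsto (1, 1)).comp
        (hn₁.tendsto_cobounded.prodMk_nhds hn₂.tendsto_cobounded)
  intro ζ hζ
  calc m₁ ζ = m₁ ζ * ((m₂ ζ).adjugate * m₂ ζ) := by
        rw [Matrix.adjugate_mul, hm₂.det_eq_one hX hXc hw hn₂ ζ hζ, one_smul, mul_one]
    _ = m₂ ζ := by rw [← mul_assoc, hprod ζ hζ, one_mul]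

end DRHP

theorem statement9 (k : ℕ) (𝔛 : Set ℂ) (hdisc : DiscreteTopology 𝔛) (hclosed : IsClosed 𝔛)
    (w : 𝔛 → Mat k) (hw : ∀ x, w x * w x = 0)
    (m : ℂ → Mat k) (hm : IsDRHPSol k 𝔛 w m)
    (δ : ℝ) (R : ℕ → ℝ) (hn : NormalizedAtInfty k 𝔛 m δ R) :
    (∀ ζ ∉ 𝔛, (m ζ).det = 1) ∧
    (∀ ζ ∉ 𝔛, IsUnit (m ζ)) ∧
    (∀ (m₁ m₂ : ℂ → Mat k) (δ' : ℝ) (R' : ℕ → ℝ),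
      IsDRHPSol k 𝔛 w m₁ → IsDRHPSol k 𝔛 w m₂ →
      NormalizedAtInfty k 𝔛 m₁ δ' R' → NormalizedAtInfty k 𝔛 m₂ δ' R' →
      ∀ ζ ∉ 𝔛, m₁ ζ = m₂ ζ) := by
  have hdet := hm.det_eq_one hdisc hclosed hw hn
  refine ⟨hdet, fun ζ hζ => ?_, fun m₁ m₂ δ' R' hm₁ hm₂ hn₁ hn₂ =>
    hm₁.eq_of_normalizedAtInfty hdisc hclosed hw hm₂ hn₁ hn₂⟩
  rw [Matrix.isUnit_iff_isUnit_det, hdet ζ hζ]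
  exact isUnit_one
end
end
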